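/- For the Fibonacci configurations, the distance between the point nearest the south pole and the point three index steps above it satisfies lim_{N→∞} √(2N+1)·|x_{−N} − x_{−N+3}| = √(16 − √112·cos(6π/φ)). -/

import Mathlib

open MeasureTheory Metric Filter Real Topology

noncomputable section

/-- Euclidean space `ℝ³`. -/
abbrev E3 := EuclideanSpace ℝ (Fin 3)

/-- Constructor for points of `ℝ³` from coordinates. -/
def pt3 (a b c : ℝ) : E3 := (EuclideanSpace.equiv (Fin 3) ℝ).symm ![a, b, c]

/-- The golden ratio `φ = (1 + √5)/2`. -/
def goldenRatio' : ℝ := (1 + Real.sqrt 5) / 2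

/-- Latitude `ψ_i = arcsin(2i/(2N+1))` of the `i`-th Fibonacci point. -/
def fibPsi (N : ℕ) (i : ℤ) : ℝ := Real.arcsin (2 * (i : ℝ) / (2 * (N : ℝ) + 1))

/-- Azimuth `θ_i = 2πi/φ` of the `i`-th Fibonacci point. -/
def fibTheta (i : ℤ) : ℝ := 2 * π * (i : ℝ) / goldenRatio'

/-- The `i`-th Fibonacci point `x_i` on `S²`, for `-N ≤ i ≤ N`. -/
def fibPt (N : ℕ) (i : ℤ) : E3 :=
  pt3 (Real.cos (fibPsi N i) * Real.cos (fibTheta i))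
      (Real.cos (fibPsi N i) * Real.sin (fibTheta i))
      (Real.sin (fibPsi N i))

/-! For unit vectors `|x - y|² = 2 - 2⟨x, y⟩`, and in latitude/longitude coordinates
`⟨x, y⟩ = z z' + √(1 - z²) √(1 - z'²) cos (θ - θ')`. The point `x_{-N+k}` has height
`z = -1 + (2k+1) ε` with `ε = 1/(2N+1)`, so `1 - z²` is `ε` times a continuous function of `ε`.
Hence `(2N+1) |x_{-N+k} - x_{-N+l}|²` is a continuous function of `ε`, and its value at `ε = 0`
is the limit. -/

def sphericalPt (ψ θ : ℝ) : E3 := pt3 (cos ψ * cos θ) (cos ψ * sin θ) (sin ψ)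

lemma dist_pt3_sq (a b c a' b' c' : ℝ) :
    dist (pt3 a b c) (pt3 a' b' c') ^ 2 = (a - a') ^ 2 + (b - b') ^ 2 + (c - c') ^ 2 := by
  rw [EuclideanSpace.dist_eq, Real.sq_sqrt (by positivity), Fin.sum_univ_three]
  simp only [pt3, Real.dist_eq, sq_abs]
  rfl

theorem dist_sphericalPt_sq (ψ₁ θ₁ ψ₂ θ₂ : ℝ) :
    dist (sphericalPt ψ₁ θ₁) (sphericalPt ψ₂ θ₂) ^ 2 =
      2 - 2 * (sin ψ₁ * sin ψ₂ + cos ψ₁ * cos ψ₂ * cos (θ₁ - θ₂)) := by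
  rw [sphericalPt, sphericalPt, dist_pt3_sq, cos_sub]
  linear_combination cos ψ₁ ^ 2 * sin_sq_add_cos_sq θ₁ + cos ψ₂ ^ 2 * sin_sq_add_cos_sq θ₂
    + sin_sq_add_cos_sq ψ₁ + sin_sq_add_cos_sq ψ₂

lemma inv_mul_chord_sq_near_south_pole {ε : ℝ} (hε : 0 < ε) (a b c : ℝ) :
    ε⁻¹ * (2 - 2 * ((-1 + a * ε) * (-1 + b * ε)
        + √(1 - (-1 + a * ε) ^ 2) * √(1 - (-1 + b * ε) ^ 2) * c))
      = 2 * (a + b) - 2 * a * b * ε - 2 * √(2 * a - a ^ 2 * ε) * √(2 * b - b ^ 2 * ε) * c := by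
  have hsplit (x : ℝ) : √(1 - (-1 + x * ε) ^ 2) = √ε * √(2 * x - x ^ 2 * ε) := by
    rw [← Real.sqrt_mul hε.le]
    ring_nf
  rw [hsplit a, hsplit b, mul_mul_mul_comm, Real.mul_self_sqrt hε.le]
  field_simp
  ring

lemma fibPt_eq_sphericalPt (N : ℕ) (i : ℤ) : fibPt N i = sphericalPt (fibPsi N i) (fibTheta i) :=
  rfl

lemma fibTheta_sub (i j : ℤ) : fibTheta i - fibTheta j = fibTheta (i - j) := by
  unfold fibTheta
  push_cast
  ring

lemma cos_fibPsi (N : ℕ) (i : ℤ) : cos (fibPsi N i) = √(1 - sin (fibPsi N i) ^ 2) := by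
  rw [← cos_sq']
  exact (Real.sqrt_sq (Real.cos_arcsin_nonneg _)).symm

lemma sin_fibPsi_neg_add {N k : ℕ} (hk : k ≤ 2 * N) :
    sin (fibPsi N (-N + k)) = -1 + (2 * k + 1) * (2 * N + 1 : ℝ)⁻¹ := by
  have hm : (0 : ℝ) < 2 * N + 1 := by positivity
  have hk' : (k : ℝ) ≤ 2 * N := by exact_mod_cast hk
  have hz : 2 * ((-N + k : ℤ) : ℝ) / (2 * N + 1) = -1 + (2 * k + 1) * (2 * N + 1 : ℝ)⁻¹ := by
    push_cast
    field_simp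
    ring
  rw [fibPsi, hz, Real.sin_arcsin]
  · exact le_add_of_nonneg_right (by positivity)
  · rw [← div_eq_mul_inv, neg_add_le_iff_le_add, div_le_iff₀ hm]
    linarith

theorem tendsto_mul_dist_fibPt_sq (k l : ℕ) :
    Tendsto (fun N : ℕ => (2 * N + 1 : ℝ) * dist (fibPt N (-N + k)) (fibPt N (-N + l)) ^ 2) atTop
      (𝓝 (4 * (k + l + 1) - 4 * √((2 * k + 1) * (2 * l + 1)) * cos (fibTheta (k - l)))) := by
  set a : ℝ := 2 * k + 1
  set b : ℝ := 2 * l + 1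
  set c := cos (fibTheta (k - l))
  set g : ℝ → ℝ := fun ε =>
    2 * (a + b) - 2 * a * b * ε - 2 * √(2 * a - a ^ 2 * ε) * √(2 * b - b ^ 2 * ε) * c
  have hg : Continuous g := by fun_prop
  have hg0 : g 0 = 4 * (k + l + 1) - 4 * √(a * b) * c := by
    have hab : √(2 * a) * √(2 * b) = 2 * √(a * b) := by
      rw [← Real.sqrt_mul (by positivity), show 2 * a * (2 * b) = 2 ^ 2 * (a * b) by ring,
        Real.sqrt_mul (by positivity), Real.sqrt_sq zero_le_two]
    simp only [g, mul_zero, sub_zero]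
    linear_combination (-2 * c) * hab
  have hε : Tendsto (fun N : ℕ => (2 * N + 1 : ℝ)⁻¹) atTop (𝓝 0) :=
    (tendsto_atTop_add_const_right _ 1
      (tendsto_natCast_atTop_atTop.const_mul_atTop two_pos)).inv_tendsto_atTop
  rw [← hg0]
  refine ((hg.tendsto 0).comp hε).congr' ?_
  filter_upwards [eventually_ge_atTop (k + l)] with N hN
  have hm : (0 : ℝ) < (2 * N + 1 : ℝ)⁻¹ := by positivity
  simp only [Function.comp_apply, g]
  rw [← inv_mul_chord_sq_near_south_pole hm, inv_inv, fibPt_eq_sphericalPt,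
    fibPt_eq_sphericalPt, dist_sphericalPt_sq, cos_fibPsi, cos_fibPsi,
    sin_fibPsi_neg_add (by omega), sin_fibPsi_neg_add (by omega), fibTheta_sub,
    show (-N + k : ℤ) - (-N + l) = k - l by ring]

/-- For the Fibonacci configurations, the distance between the point nearest the south
pole and the point three index steps above it satisfies
`lim_{N→∞} √(2N+1)·|x_{-N} − x_{-N+3}| = √(16 − √112·cos(6π/φ))`. -/
theorem fibonacci_polar_distance_limit :
    Tendsto (fun N : ℕ =>
        Real.sqrt (2 * (N : ℝ) + 1) * dist (fibPt N (-(N : ℤ))) (fibPt N (-(N : ℤ) + 3)))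
      atTop
      (𝓝 (Real.sqrt (16 - Real.sqrt 112 * Real.cos (6 * π / goldenRatio')))) := by
  have hlim := (tendsto_mul_dist_fibPt_sq 0 3).sqrt
  have h112 : √112 = 4 * √((2 * 0 + 1) * (2 * 3 + 1)) := by
    rw [show (112 : ℝ) = 4 ^ 2 * ((2 * 0 + 1) * (2 * 3 + 1)) by norm_num,
      Real.sqrt_mul (by norm_num), Real.sqrt_sq (by norm_num)]
  have hθ : cos (fibTheta ((0 : ℕ) - (3 : ℕ))) = cos (6 * π / goldenRatio') := by
    rw [fibTheta, ← cos_neg]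
    congr 1
    push_cast
    ring
  convert hlim using 2 with N
  · rw [Real.sqrt_mul (by positivity), Real.sqrt_sq dist_nonneg]
    simp
  · rw [h112, ← hθ]
    norm_num

end
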